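/- For every t ∈ [0,T), the function γ is integrable on the interval (t,T) and exp(−∫_t^T γ(s) ds) = β(t); equivalently, ∫_t^T γ(s) ds = −log β(t). -/

import Mathlib

open MeasureTheory Real Set Filter

/-- Standard normal cdf `N(x)`. -/
noncomputable def stdCdf (x : ℝ) : ℝ := ∫ y in Set.Iic x, Real.exp (-y ^ 2 / 2) / Real.sqrt (2 * Real.pi)

/-- Standard normal pdf `n(x)`. -/
noncomputable def stdPdf (x : ℝ) : ℝ := Real.exp (-x ^ 2 / 2) / Real.sqrt (2 * Real.pi)

/-- `β(t) = 1 − (2σ/√(2r+σ²))·(N(√((2r+σ²)(T−t))) − 1/2)`. -/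
noncomputable def betaDY (T σ r t : ℝ) : ℝ :=
  1 - 2 * σ / Real.sqrt (2 * r + σ ^ 2) *
    (stdCdf (Real.sqrt ((2 * r + σ ^ 2) * (T - t))) - 1 / 2)

/-- `γ(t) = σ·n(√((2r+σ²)(T−t)))/(√(T−t)·β(t))`. -/
noncomputable def gammaDY (T σ r t : ℝ) : ℝ :=
  σ * stdPdf (Real.sqrt ((2 * r + σ ^ 2) * (T - t))) / (Real.sqrt (T - t) * betaDY T σ r t)

/-! `γ` is the logarithmic derivative of `β` on `(-∞, T)`: by the chain rule, the derivative of
`N(√((2r+σ²)(T-s)))` is `-n(·)·√(2r+σ²)/(2√(T-s))`, so `β' = σ n(·)/√(T-s) = γ β`. Since `N ≤ 1`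
and `σ < √(2r+σ²)`, `β` stays above `1 - σ/√(2r+σ²) > 0`, so `log β` is continuous on `[t, T]`
with nonnegative derivative `γ`. A nonnegative derivative is integrable, and the fundamental
theorem of calculus gives `∫_t^T γ = log β(T) - log β(t) = -log β(t)`, because `N(0) = 1/2` by
symmetry of `n`. -/

open ProbabilityTheory

lemma stdPdf_eq_gaussianPDFReal : stdPdf = gaussianPDFReal 0 1 := by
  ext x
  simp [stdPdf, gaussianPDFReal, div_eq_inv_mul]

lemma stdPdf_nonneg (x : ℝ) : 0 ≤ stdPdf x := by
  unfold stdPdf; positivity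

lemma stdPdf_neg (x : ℝ) : stdPdf (-x) = stdPdf x := by
  simp [stdPdf]

lemma continuous_stdPdf : Continuous stdPdf := by
  unfold stdPdf; fun_prop

lemma integrable_stdPdf : Integrable stdPdf :=
  stdPdf_eq_gaussianPDFReal ▸ integrable_gaussianPDFReal 0 1

lemma integral_stdPdf : ∫ x, stdPdf x = 1 :=
  stdPdf_eq_gaussianPDFReal ▸ integral_gaussianPDFReal_eq_one 0 one_ne_zero

lemma stdCdf_eq_setIntegral (x : ℝ) : stdCdf x = ∫ y in Iic x, stdPdf y := rfl

lemma stdCdf_le_one (x : ℝ) : stdCdf x ≤ 1 :=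
  integral_stdPdf ▸ setIntegral_le_integral integrable_stdPdf (.of_forall stdPdf_nonneg)

lemma stdCdf_zero : stdCdf 0 = 1 / 2 := by
  have hsymm : ∫ y in Ioi (0 : ℝ), stdPdf y = stdCdf 0 := by
    rw [stdCdf_eq_setIntegral]
    simpa [stdPdf_neg] using (integral_comp_neg_Iic (0 : ℝ) stdPdf).symm
  have hsplit : stdCdf 0 + ∫ y in Ioi (0 : ℝ), stdPdf y = 1 :=
    integral_stdPdf ▸ intervalIntegral.integral_Iic_add_Ioi integrable_stdPdf.integrableOn
      integrable_stdPdf.integrableOn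
  linarith

lemma hasDerivAt_stdCdf (x : ℝ) : HasDerivAt stdCdf (stdPdf x) x := by
  have hFTC : stdCdf = fun u => (∫ y in (0 : ℝ)..u, stdPdf y) + stdCdf 0 := by
    funext u
    rw [stdCdf_eq_setIntegral, stdCdf_eq_setIntegral, ← intervalIntegral.integral_Iic_sub_Iic
      integrable_stdPdf.integrableOn integrable_stdPdf.integrableOn, sub_add_cancel]
  rw [hFTC]
  exact (intervalIntegral.integral_hasDerivAt_right integrable_stdPdf.intervalIntegrable
    (continuous_stdPdf.stronglyMeasurableAtFilter _ _) continuous_stdPdf.continuousAt).add_const _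

@[fun_prop]
lemma continuous_stdCdf : Continuous stdCdf :=
  continuous_iff_continuousAt.2 fun x => (hasDerivAt_stdCdf x).continuousAt

lemma div_sqrt_two_mul_add_sq_lt_one {σ r : ℝ} (hr : 0 < r) : σ / √(2 * r + σ ^ 2) < 1 := by
  have hlt : σ < √(2 * r + σ ^ 2) :=
    calc σ ≤ |σ| := le_abs_self σ
      _ = √(σ ^ 2) := (Real.sqrt_sq_eq_abs σ).symm
      _ < √(2 * r + σ ^ 2) := Real.sqrt_lt_sqrt (sq_nonneg σ) (by linarith)
  exact (div_lt_one (by positivity)).2 hlt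

section betaDY

variable {T σ r : ℝ}

lemma betaDY_pos (hσ : 0 ≤ σ) (hr : 0 < r) (s : ℝ) : 0 < betaDY T σ r s := by
  have hN := stdCdf_le_one √((2 * r + σ ^ 2) * (T - s))
  have hbound : 2 * σ / √(2 * r + σ ^ 2) * (stdCdf √((2 * r + σ ^ 2) * (T - s)) - 1 / 2)
      ≤ σ / √(2 * r + σ ^ 2) :=
    calc _ ≤ 2 * σ / √(2 * r + σ ^ 2) * (1 / 2) :=
          mul_le_mul_of_nonneg_left (by linarith) (by positivity)
      _ = σ / √(2 * r + σ ^ 2) := by ring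
  have hlt_one := div_sqrt_two_mul_add_sq_lt_one (σ := σ) hr
  unfold betaDY
  linarith

lemma betaDY_self : betaDY T σ r T = 1 := by
  simp [betaDY, stdCdf_zero]

lemma continuous_betaDY : Continuous (betaDY T σ r) := by
  unfold betaDY
  fun_prop

lemma hasDerivAt_betaDY {s : ℝ} (hκ : 0 < 2 * r + σ ^ 2) (hs : s < T) :
    HasDerivAt (betaDY T σ r) (σ * stdPdf √((2 * r + σ ^ 2) * (T - s)) / √(T - s)) s := by
  have hTs : 0 < T - s := sub_pos.2 hs
  have hinner : HasDerivAt (fun u => (2 * r + σ ^ 2) * (T - u)) ((2 * r + σ ^ 2) * -1) s :=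
    ((hasDerivAt_id s).const_sub T).const_mul (2 * r + σ ^ 2)
  have hN := (hasDerivAt_stdCdf _).comp s ((hasDerivAt_sqrt (mul_pos hκ hTs).ne').comp s hinner)
  refine (((hN.sub_const (1 / 2)).const_mul (2 * σ / √(2 * r + σ ^ 2))).const_sub 1).congr_deriv ?_
  simp only [Function.comp_apply]
  generalize stdPdf √((2 * r + σ ^ 2) * (T - s)) = n
  rw [sqrt_mul hκ.le]
  field_simp
  rw [sq_sqrt hκ.le]

lemma hasDerivAt_log_betaDY {s : ℝ} (hσ : 0 ≤ σ) (hr : 0 < r) (hs : s < T) :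
    HasDerivAt (fun u => log (betaDY T σ r u)) (gammaDY T σ r s) s := by
  convert (hasDerivAt_betaDY (by positivity) hs).log (betaDY_pos hσ hr s).ne' using 1
  rw [gammaDY, div_div]

lemma gammaDY_nonneg (hσ : 0 ≤ σ) (hr : 0 < r) (s : ℝ) : 0 ≤ gammaDY T σ r s :=
  div_nonneg (mul_nonneg hσ (stdPdf_nonneg _)) (mul_nonneg (sqrt_nonneg _) (betaDY_pos hσ hr s).le)

end betaDY

theorem gammaDY_integral_general (T σ r : ℝ) (hσ : 0 < σ) (hr : 0 < r)
    (t : ℝ) (htT : t < T) :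
    IntegrableOn (gammaDY T σ r) (Set.Ioo t T) ∧
      Real.exp (-(∫ s in t..T, gammaDY T σ r s)) = betaDY T σ r t ∧
      ∫ s in t..T, gammaDY T σ r s = -Real.log (betaDY T σ r t) := by
  have hcont : ContinuousOn (fun u => log (betaDY T σ r u)) (Icc t T) :=
    continuous_betaDY.continuousOn.log fun s _ => (betaDY_pos hσ.le hr s).ne'
  have hderiv : ∀ s ∈ Ioo t T, HasDerivAt (fun u => log (betaDY T σ r u)) (gammaDY T σ r s) s :=
    fun s hs => hasDerivAt_log_betaDY hσ.le hr hs.2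
  have hint : IntervalIntegrable (gammaDY T σ r) volume t T :=
    intervalIntegral.intervalIntegrable_deriv_of_nonneg (uIcc_of_le htT.le ▸ hcont)
      (by simpa [htT.le] using hderiv) fun s _ => gammaDY_nonneg hσ.le hr s
  have hFTC : ∫ s in t..T, gammaDY T σ r s = -log (betaDY T σ r t) := by
    rw [intervalIntegral.integral_eq_sub_of_hasDerivAt_of_le htT.le hcont hderiv hint,
      betaDY_self, log_one, zero_sub]
  refine ⟨(intervalIntegrable_iff_integrableOn_Ioo_of_le htT.le).1 hint, ?_, hFTC⟩
  rw [hFTC, neg_neg, exp_log (betaDY_pos hσ.le hr t)]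

theorem gammaDY_integral (K T σ r : ℝ) (hK : 0 < K) (hT : 0 < T) (hσ : 0 < σ) (hr : 0 < r)
    (t : ℝ) (ht0 : 0 ≤ t) (htT : t < T) :
    IntegrableOn (gammaDY T σ r) (Set.Ioo t T) ∧
      Real.exp (-(∫ s in t..T, gammaDY T σ r s)) = betaDY T σ r t ∧
      ∫ s in t..T, gammaDY T σ r s = -Real.log (betaDY T σ r t) :=
  gammaDY_integral_general T σ r hσ hr t htT
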